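/- There is no duality gap: the minimal value of the primal problem and the maximal value of the dual problem coincide and both equal −½·v^⊤z*, i.e. inf{ f(z) : z ∈ ℝⁿ, c^⊤z = 0, zₙ ≥ 0 } = sup{ q(λ,μ) : λ ∈ ℝ, μ ≥ 0 } = −½·v^⊤z*. -/
import Mathlib


open Finset

noncomputable section

namespace Stmt5

/-- The last index of `Fin (n+2)`. -/
def lastIdx (n : ℕ) : Fin (n + 2) := Fin.last (n + 1)

variable {n : ℕ}

/-- `c^⊤ D⁻¹ v` for the diagonal matrix `D = diag d`. -/
def cDv (d v c : Fin (n + 2) → ℝ) : ℝ := ∑ i, c i * v i / d i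

/-- `c^⊤ D⁻¹ c` for the diagonal matrix `D = diag d`. -/
def cDc (d c : Fin (n + 2) → ℝ) : ℝ := ∑ i, c i * c i / d i

/-- The indicator `1_A`. -/
def indA (d v c : Fin (n + 2) → ℝ) : ℝ :=
  if v (lastIdx n) - cDv d v c / cDc d c * c (lastIdx n) < 0 then 1 else 0

/-- `λ*`. -/
def lamStar (d v c : Fin (n + 2) → ℝ) : ℝ :=
  (cDv d v c - c (lastIdx n) * v (lastIdx n) / d (lastIdx n) * indA d v c) /
    (cDc d c - c (lastIdx n) ^ 2 / d (lastIdx n) * indA d v c)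

/-- `μ* = max (-(vₙ - λ* cₙ)) 0`. -/
def muStar (d v c : Fin (n + 2) → ℝ) : ℝ :=
  max (-(v (lastIdx n) - lamStar d v c * c (lastIdx n))) 0

/-- `z* = D⁻¹ (v - λ* c + μ* eₙ)`. -/
def zStar (d v c : Fin (n + 2) → ℝ) : Fin (n + 2) → ℝ := fun i =>
  (v i - lamStar d v c * c i + muStar d v c * (if i = lastIdx n then 1 else 0)) / d i

/-- The primal cost function `f(z) = ½ z^⊤ D z - v^⊤ z`. -/
def f (d v z : Fin (n + 2) → ℝ) : ℝ :=
  (1 / 2) * ∑ i, d i * z i ^ 2 - ∑ i, v i * z i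

/-- The Lagrangian `L(z,λ,μ) = f(z) + λ c^⊤ z - μ zₙ`. -/
def L (d v c : Fin (n + 2) → ℝ) (lam mu : ℝ) (z : Fin (n + 2) → ℝ) : ℝ :=
  f d v z + lam * ∑ i, c i * z i - mu * z (lastIdx n)

def w (v c : Fin (n + 2) → ℝ) (lam mu : ℝ) : Fin (n + 2) → ℝ := fun i =>
  v i - lam * c i + mu * (if i = lastIdx n then 1 else 0)

def zhat (d v c : Fin (n + 2) → ℝ) (lam mu : ℝ) : Fin (n + 2) → ℝ := fun i =>
  w v c lam mu i / d i

lemma zhat_star (d v c : Fin (n + 2) → ℝ) :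
    zhat d v c (lamStar d v c) (muStar d v c) = zStar d v c := rfl

lemma L_sum (d v c : Fin (n + 2) → ℝ) (lam mu : ℝ) (z : Fin (n + 2) → ℝ) :
    L d v c lam mu z = ∑ i, ((1 / 2) * (d i * z i ^ 2) - w v c lam mu i * z i) := by
  have hz : mu * z (lastIdx n) = ∑ i, mu * ((if i = lastIdx n then (1:ℝ) else 0) * z i) := by
    simp [mul_ite, ite_mul, Finset.sum_ite_eq']
  rw [L, f, hz, Finset.mul_sum, Finset.mul_sum, ← Finset.sum_sub_distrib,
    ← Finset.sum_add_distrib, ← Finset.sum_sub_distrib]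
  exact Finset.sum_congr rfl fun i _ => by unfold w; ring

lemma L_split (d v c : Fin (n + 2) → ℝ) (hd : ∀ i, 0 < d i) (lam mu : ℝ)
    (z : Fin (n + 2) → ℝ) :
    L d v c lam mu z = (1 / 2) * ∑ i, d i * (z i - zhat d v c lam mu i) ^ 2 +
      L d v c lam mu (zhat d v c lam mu) := by
  rw [L_sum, L_sum, Finset.mul_sum, ← Finset.sum_add_distrib]
  refine Finset.sum_congr rfl fun i _ => ?_
  have hdi := (hd i).ne'
  unfold zhat
  field_simp
  ring

lemma L_ge (d v c : Fin (n + 2) → ℝ) (hd : ∀ i, 0 < d i) (lam mu : ℝ)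
    (z : Fin (n + 2) → ℝ) :
    L d v c lam mu (zhat d v c lam mu) ≤ L d v c lam mu z := by
  rw [L_split d v c hd lam mu z]
  have h : 0 ≤ ∑ i, d i * (z i - zhat d v c lam mu i) ^ 2 :=
    Finset.sum_nonneg fun i _ => mul_nonneg (hd i).le (sq_nonneg _)
  linarith

lemma sInf_range_L (d v c : Fin (n + 2) → ℝ) (hd : ∀ i, 0 < d i) (lam mu : ℝ) :
    sInf (Set.range (L d v c lam mu)) = L d v c lam mu (zhat d v c lam mu) :=
  IsLeast.csInf_eq ⟨⟨zhat d v c lam mu, rfl⟩,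
    fun x ⟨z, hz⟩ => hz ▸ L_ge d v c hd lam mu z⟩

lemma sum_c_zhat (d v c : Fin (n + 2) → ℝ) (hd : ∀ i, 0 < d i) (lam mu : ℝ) :
    ∑ i, c i * zhat d v c lam mu i =
      cDv d v c - lam * cDc d c + mu * (c (lastIdx n) / d (lastIdx n)) := by
  have key : ∀ i : Fin (n + 2), c i * zhat d v c lam mu i =
      c i * v i / d i - lam * (c i * c i / d i) +
        mu * ((if i = lastIdx n then (1:ℝ) else 0) * (c i / d i)) := by
    intro i
    have hdi := (hd i).ne'
    unfold zhat w
    split_ifs <;> field_simp <;> ring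
  rw [Finset.sum_congr rfl fun i _ => key i, Finset.sum_add_distrib,
    Finset.sum_sub_distrib, ← Finset.mul_sum, ← Finset.mul_sum]
  rw [cDv, cDc]
  congr 1
  congr 1
  simp [ite_mul, Finset.sum_ite_eq']

lemma star_facts (d v c : Fin (n + 2) → ℝ) (hd : ∀ i, 0 < d i)
    (hc : ∃ i : Fin (n + 2), i ≠ lastIdx n ∧ c i ≠ 0) :
    (∑ i, c i * zStar d v c i = 0) ∧ 0 ≤ zStar d v c (lastIdx n) ∧
      muStar d v c * zStar d v c (lastIdx n) = 0 := by
  obtain ⟨j, hjN, hjc⟩ := hc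
  have hCb : 0 < cDc d c - c (lastIdx n) ^ 2 / d (lastIdx n) := by
    have he : cDc d c - c (lastIdx n) ^ 2 / d (lastIdx n) =
        ∑ i ∈ Finset.univ.erase (lastIdx n), c i * c i / d i := by
      rw [cDc, ← Finset.sum_erase_add _ _ (Finset.mem_univ (lastIdx n))]
      ring
    rw [he]
    refine Finset.sum_pos' (fun i _ => div_nonneg (mul_self_nonneg _) (hd i).le)
      ⟨j, Finset.mem_erase.mpr ⟨hjN, Finset.mem_univ j⟩,
        div_pos (mul_self_pos.mpr hjc) (hd j)⟩
  have hC : 0 < cDc d c := by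
    have hb : 0 ≤ c (lastIdx n) ^ 2 / d (lastIdx n) := by
      have := (hd (lastIdx n)).le
      positivity
    linarith
  have hsum : ∑ i, c i * zStar d v c i =
      cDv d v c - lamStar d v c * cDc d c +
        muStar d v c * (c (lastIdx n) / d (lastIdx n)) := by
    rw [← zhat_star]; exact sum_c_zhat d v c hd _ _
  by_cases hA : v (lastIdx n) - cDv d v c / cDc d c * c (lastIdx n) < 0
  · have hind : indA d v c = 1 := if_pos hA
    have hlam : lamStar d v c = (cDv d v c - c (lastIdx n) * v (lastIdx n) / d (lastIdx n)) /
        (cDc d c - c (lastIdx n) ^ 2 / d (lastIdx n)) := by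
      rw [lamStar, hind, mul_one, mul_one]
    have hvC : v (lastIdx n) * cDc d c < cDv d v c * c (lastIdx n) := by
      have h1 := sub_neg.mp hA
      rwa [div_mul_eq_mul_div, lt_div_iff₀ hC] at h1
    have hkey : v (lastIdx n) * (cDc d c - c (lastIdx n) ^ 2 / d (lastIdx n)) <
        (cDv d v c - c (lastIdx n) * v (lastIdx n) / d (lastIdx n)) * c (lastIdx n) := by
      have hvb : v (lastIdx n) * (c (lastIdx n) ^ 2 / d (lastIdx n)) =
          (c (lastIdx n) * v (lastIdx n) / d (lastIdx n)) * c (lastIdx n) := by ring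
      nlinarith [hvC]
    have hmuneg : v (lastIdx n) - lamStar d v c * c (lastIdx n) < 0 := by
      rw [hlam, sub_neg, div_mul_eq_mul_div, lt_div_iff₀ hCb]
      exact hkey.trans_eq (by ring)
    have hmuStar : muStar d v c = -(v (lastIdx n) - lamStar d v c * c (lastIdx n)) :=
      max_eq_left (by linarith)
    have hzN : zStar d v c (lastIdx n) = 0 := by
      show (v (lastIdx n) - lamStar d v c * c (lastIdx n) +
        muStar d v c * (if lastIdx n = lastIdx n then (1:ℝ) else 0)) / d (lastIdx n) = 0
      rw [if_pos rfl, hmuStar]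
      have : v (lastIdx n) - lamStar d v c * c (lastIdx n) +
          -(v (lastIdx n) - lamStar d v c * c (lastIdx n)) * 1 = 0 := by ring
      rw [this, zero_div]
    have hl : lamStar d v c * (cDc d c - c (lastIdx n) ^ 2 / d (lastIdx n)) =
        cDv d v c - c (lastIdx n) * v (lastIdx n) / d (lastIdx n) := by
      rw [hlam, div_mul_cancel₀ _ hCb.ne']
    refine ⟨?_, by rw [hzN], by rw [hzN, mul_zero]⟩
    rw [hsum, hmuStar]
    linear_combination -hl
  · have hind : indA d v c = 0 := if_neg hA
    have hlam : lamStar d v c = cDv d v c / cDc d c := by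
      rw [lamStar, hind, mul_zero, mul_zero, sub_zero, sub_zero]
    have hge : 0 ≤ v (lastIdx n) - lamStar d v c * c (lastIdx n) := by
      rw [hlam]; linarith [not_lt.mp hA]
    have hmuStar : muStar d v c = 0 := max_eq_right (by linarith)
    have hzN : 0 ≤ zStar d v c (lastIdx n) := by
      show 0 ≤ (v (lastIdx n) - lamStar d v c * c (lastIdx n) +
        muStar d v c * (if lastIdx n = lastIdx n then (1:ℝ) else 0)) / d (lastIdx n)
      rw [if_pos rfl, hmuStar, zero_mul, add_zero]
      exact div_nonneg hge (hd (lastIdx n)).le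
    refine ⟨?_, hzN, by rw [hmuStar, zero_mul]⟩
    rw [hsum, hmuStar, hlam, zero_mul, add_zero, div_mul_cancel₀ _ hC.ne', sub_self]

lemma sum_dz_sq (d v c : Fin (n + 2) → ℝ) (hd : ∀ i, 0 < d i) :
    ∑ i, d i * zStar d v c i ^ 2 =
      ∑ i, v i * zStar d v c i - lamStar d v c * ∑ i, c i * zStar d v c i +
        muStar d v c * zStar d v c (lastIdx n) := by
  have key : ∀ i, d i * zStar d v c i ^ 2 =
      v i * zStar d v c i - lamStar d v c * (c i * zStar d v c i) +
        muStar d v c * ((if i = lastIdx n then (1:ℝ) else 0) * zStar d v c i) := by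
    intro i
    have hdi := (hd i).ne'
    simp only [zStar]
    split_ifs <;> field_simp <;> ring
  rw [Finset.sum_congr rfl fun i _ => key i, Finset.sum_add_distrib,
    Finset.sum_sub_distrib, ← Finset.mul_sum, ← Finset.mul_sum]
  congr 1
  congr 1
  simp [ite_mul, Finset.sum_ite_eq']


/-- There is no duality gap: the optimal value of the primal problem and the optimal
value of the dual problem coincide and both equal `-½ v^⊤ z*`. -/
theorem no_duality_gap
    (n : ℕ) (d v c : Fin (n + 2) → ℝ)
    (hd : ∀ i, 0 < d i)
    (hc : ∃ i : Fin (n + 2), i ≠ lastIdx n ∧ c i ≠ 0) :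
    sInf (f d v '' {z | (∑ i, c i * z i = 0) ∧ 0 ≤ z (lastIdx n)}) =
      -(1 / 2) * ∑ i, v i * zStar d v c i ∧
    sSup {x : ℝ | ∃ lam mu : ℝ, 0 ≤ mu ∧ x = sInf (Set.range (L d v c lam mu))} =
      -(1 / 2) * ∑ i, v i * zStar d v c i := by
  obtain ⟨h1, h2, h3⟩ := star_facts d v c hd hc
  have hfz : f d v (zStar d v c) = -(1 / 2) * ∑ i, v i * zStar d v c i := by
    rw [f, sum_dz_sq d v c hd, h1, h3, mul_zero, sub_zero, add_zero]
    ring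
  have hLz : L d v c (lamStar d v c) (muStar d v c) (zStar d v c) = f d v (zStar d v c) := by
    rw [L, h1, mul_zero, add_zero, h3, sub_zero]
  constructor
  · rw [← hfz]
    apply IsLeast.csInf_eq
    constructor
    · exact ⟨zStar d v c, ⟨h1, h2⟩, rfl⟩
    · rintro x ⟨z, ⟨hz1, hz2⟩, rfl⟩
      have hge := L_ge d v c hd (lamStar d v c) (muStar d v c) z
      rw [zhat_star, hLz] at hge
      have hL : L d v c (lamStar d v c) (muStar d v c) z =
          f d v z - muStar d v c * z (lastIdx n) := by
        rw [L, hz1, mul_zero, add_zero]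
      have hmu : (0:ℝ) ≤ muStar d v c := le_max_right _ _
      nlinarith [mul_nonneg hmu hz2]
  · rw [← hfz]
    apply IsGreatest.csSup_eq
    constructor
    · exact ⟨lamStar d v c, muStar d v c, le_max_right _ _, by
        rw [sInf_range_L d v c hd, zhat_star, hLz]⟩
    · rintro x ⟨lam, mu, hmu, rfl⟩
      rw [sInf_range_L d v c hd]
      have hge := L_ge d v c hd lam mu (zStar d v c)
      have hL : L d v c lam mu (zStar d v c) =
          f d v (zStar d v c) - mu * zStar d v c (lastIdx n) := by
        rw [L, h1, mul_zero, add_zero]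
      have hnn := mul_nonneg hmu h2
      linarith


end Stmt5
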